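/- Let k, B_μ, B_ν > 0 and let n be a positive integer. Define f : (0, ∞) → ℝ by f(ξ) = (B_ν·ξ/n)/√((k² − n²ξ²)² + k²·B_μ²). Then f attains its strict global maximum on (0, ∞) at ξ = √k·(B_μ² + k²)^{1/4}/n. -/

import Mathlib

/-!
With `u = (n ξ)²`, `p = k²` and `c = k √(Bμ² + k²)` one has
`(k² - u)² + k² Bμ² = u² - 2 p u + c²`, because `c² = k⁴ + k² Bμ²`. The amplitude is then
`Bν / n²` times `√(u / (u² - 2 p u + c²))`, and
`c (u² - 2 p u + c²) - u (c² - 2 p c + c²) = c (u - c)²` shows that `u / (u² - 2 p u + c²)`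
has its strict maximum on `u ≥ 0` at `u = c`, i.e. at `n ξ = √c`.
-/

lemma div_sq_sub_add_sq_lt_of_ne {p c u : ℝ} (hc : 0 < c) (hpc : p < c) (hu : 0 ≤ u)
    (hne : u ≠ c) :
    u / (u ^ 2 - 2 * p * u + c ^ 2) < c / (c ^ 2 - 2 * p * c + c ^ 2) := by
  have hsq : 0 < (u - c) ^ 2 := by positivity [sub_ne_zero.mpr hne]
  have hden : 0 < u ^ 2 - 2 * p * u + c ^ 2 := by
    nlinarith [mul_nonneg (sub_nonneg.mpr hpc.le) hu]
  have hgap : 0 < c * (u - c) ^ 2 := mul_pos hc hsq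
  rw [div_lt_div_iff₀ hden (by nlinarith)]
  linear_combination hgap

lemma div_sqrt_eq_sqrt_sq_div {x D : ℝ} (hx : 0 ≤ x) (hD : 0 ≤ D) :
    x / √D = √(x ^ 2 / D) := by
  rw [Real.sqrt_div' _ hD, Real.sqrt_sq hx]

lemma resonance_div_sqrt_lt_of_ne {k Bμ x : ℝ} (hk : 0 < k) (hBμ : 0 < Bμ) (hx : 0 ≤ x)
    (hne : x ≠ √(k * √(Bμ ^ 2 + k ^ 2))) :
    x / √((k ^ 2 - x ^ 2) ^ 2 + k ^ 2 * Bμ ^ 2)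
      < √(k * √(Bμ ^ 2 + k ^ 2)) /
          √((k ^ 2 - √(k * √(Bμ ^ 2 + k ^ 2)) ^ 2) ^ 2 + k ^ 2 * Bμ ^ 2) := by
  set c := k * √(Bμ ^ 2 + k ^ 2)
  have hs : k < √(Bμ ^ 2 + k ^ 2) := Real.lt_sqrt_of_sq_lt (by nlinarith)
  have hc : 0 < c := by positivity
  have hpc : k ^ 2 < c := by nlinarith
  have hc2 : c ^ 2 = k ^ 4 + k ^ 2 * Bμ ^ 2 := by
    rw [mul_pow, Real.sq_sqrt (by positivity)]
    ring
  have hquad : ∀ u, (k ^ 2 - u) ^ 2 + k ^ 2 * Bμ ^ 2 = u ^ 2 - 2 * k ^ 2 * u + c ^ 2 := by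
    intro u
    rw [hc2]
    ring
  have hsq_ne : x ^ 2 ≠ c := fun h => hne (by rw [← h, Real.sqrt_sq hx])
  rw [Real.sq_sqrt hc.le, div_sqrt_eq_sqrt_sq_div hx (by positivity),
    div_sqrt_eq_sqrt_sq_div (Real.sqrt_nonneg _) (by positivity), Real.sq_sqrt hc.le]
  refine Real.sqrt_lt_sqrt (by positivity) ?_
  rw [hquad, hquad]
  exact div_sq_sub_add_sq_lt_of_ne hc hpc (sq_nonneg x) hsq_ne

lemma sqrt_mul_rpow_quarter {a b : ℝ} (ha : 0 ≤ a) (hb : 0 ≤ b) :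
    √a * b ^ ((1 : ℝ) / 4) = √(a * √b) := by
  rw [Real.sqrt_mul ha, Real.sqrt_eq_rpow b, Real.sqrt_eq_rpow (b ^ _), ← Real.rpow_mul hb]
  norm_num

theorem amplitude_max_at_subharmonic_A01
    (k Bμ Bν : ℝ) (hk : 0 < k) (hBμ : 0 < Bμ) (hBν : 0 < Bν)
    (n : ℕ) (hn : 0 < n)
    (f : ℝ → ℝ)
    (hf : ∀ ξ, f ξ = (Bν * ξ / n) /
        Real.sqrt ((k ^ 2 - n ^ 2 * ξ ^ 2) ^ 2 + k ^ 2 * Bμ ^ 2)) :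
    ∀ ξ > (0:ℝ), ξ ≠ Real.sqrt k * (Bμ ^ 2 + k ^ 2) ^ ((1:ℝ)/4) / n →
      f ξ < f (Real.sqrt k * (Bμ ^ 2 + k ^ 2) ^ ((1:ℝ)/4) / n) := by
  intro ξ hξ hne
  have hn0 : (0 : ℝ) < n := by exact_mod_cast hn
  have hscale : ∀ ξ, f ξ =
      Bν / n ^ 2 * (n * ξ / √((k ^ 2 - (n * ξ) ^ 2) ^ 2 + k ^ 2 * Bμ ^ 2)) := by
    intro ξ
    rw [hf, mul_pow]
    field_simp
  have hpeak : n * (√k * (Bμ ^ 2 + k ^ 2) ^ ((1 : ℝ) / 4) / n) = √(k * √(Bμ ^ 2 + k ^ 2)) := by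
    rw [mul_div_cancel₀ _ hn0.ne', sqrt_mul_rpow_quarter hk.le (by positivity)]
  rw [hscale, hscale, hpeak]
  refine mul_lt_mul_of_pos_left (resonance_div_sqrt_lt_of_ne hk hBμ (by positivity) ?_)
    (by positivity)
  rw [← hpeak]
  exact fun h => hne (mul_left_cancel₀ hn0.ne' h)
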